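/- Let $m \geq 1$, $\xi$ real, and set $\Xi_m = (1, \xi, \dots, \xi^m)$. There is a constant $c > 0$ depending only on $m$ and $\xi$ such that for any $k \geq 1$ linearly independent polynomials $P_1, \dots, P_k \in \mathbb{Z}[X]_{\leq m}$ (identified with integer vectors in $\mathbb{Z}^{m+1}$ via coefficients), the span $V = \langle P_1, \dots, P_k\rangle_{\mathbb{R}}$ satisfies $\hat H^*(V) \leq c \sum_{i=1}^k \frac{|P_i(\xi)|}{H(P_i)} \prod_{j=1}^k H(P_j)$, where $\hat H^*(V) = \| \Xi_m \lrcorner (\mathbf{x}_1 \wedge \cdots \wedge \mathbf{x}_k) \|$ for any $\mathbb{Z}$-basis $(\mathbf{x}_1, \dots, \mathbf{x}_k)$ of $V \cap \mathbb{Z}^{m+1}$. -/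

import Mathlib

open Matrix Polynomial

/-- Naive height of an integer polynomial, as a real number. -/
noncomputable def heightZ (P : Polynomial ℤ) : ℝ := ⨆ i : ℕ, |(P.coeff i : ℝ)|

/-- The coefficient vector of an integer polynomial of degree at most `m`. -/
def toVec (m : ℕ) (P : Polynomial ℤ) : Fin (m + 1) → ℝ := fun j => (P.coeff j : ℝ)

/-- `Ξ_m = (1, ξ, …, ξ^m)`. -/
def XiVec (m : ℕ) (ξ : ℝ) : Fin (m + 1) → ℝ := fun j => ξ ^ (j : ℕ)

/-- Plücker coordinate of `x₁ ∧ ⋯ ∧ x_k` at a subset `s` of cardinality `k`. -/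
noncomputable def wedgeCoord {N k : ℕ} (x : Fin k → Fin N → ℝ)
    (s : {s : Finset (Fin N) // s.card = k}) : ℝ :=
  Matrix.det (Matrix.of fun i j : Fin k => x j (s.1.orderIsoOfFin s.2 i))

/-- Coordinates of the contraction `y ⌟ (x₀ ∧ ⋯ ∧ x_r)
= ∑ᵢ (-1)^{r-i} ⟨xᵢ, y⟩ x₀ ∧ ⋯ ∧ x̂ᵢ ∧ ⋯ ∧ x_r`. -/
noncomputable def contractCoord {N r : ℕ} (y : Fin N → ℝ)
    (x : Fin (r + 1) → Fin N → ℝ) (s : {s : Finset (Fin N) // s.card = r}) : ℝ :=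
  ∑ i : Fin (r + 1), (-1 : ℝ) ^ (r - (i : ℕ)) * (x i ⬝ᵥ y) *
    wedgeCoord (fun a => x (i.succAbove a)) s

/-- `‖y ⌟ (x₀ ∧ ⋯ ∧ x_r)‖`: the Euclidean norm of the contracted multivector. -/
noncomputable def contractNorm {N r : ℕ} (y : Fin N → ℝ)
    (x : Fin (r + 1) → Fin N → ℝ) : ℝ :=
  Real.sqrt (∑ s : {s : Finset (Fin N) // s.card = r}, (contractCoord y x s) ^ 2)

/-- `xs` is a `ℤ`-basis of `V ∩ ℤ^{m+1}` spanning `V` over `ℝ`. -/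
def IsZBasis {m k : ℕ} (V : Submodule ℝ (Fin (m + 1) → ℝ))
    (xs : Fin k → Fin (m + 1) → ℝ) : Prop :=
  (∀ i j, ∃ z : ℤ, xs i j = (z : ℝ)) ∧
  Submodule.span ℝ (Set.range xs) = V ∧
  LinearIndependent ℝ xs ∧
  ∀ v ∈ V, (∀ j, ∃ z : ℤ, v j = (z : ℝ)) →
    ∃ c : Fin k → ℤ, v = ∑ i, (c i : ℝ) • xs i


/-!
Expanding along the row of inner products, each Plücker coordinate of
`Ξ ⌟ (P₀ ∧ ⋯ ∧ P_r)` is a sum over `i` of `±Pᵢ(ξ)` times an `r × r` minor of the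
coefficient vectors of the other polynomials, and that minor is at most
`r! ∏_{j ≠ i} H(Pⱼ)`. The `Pᵢ` lie in the lattice `V ∩ ℤ^{m+1}`, so
`P₀ ∧ ⋯ ∧ P_r = det B · x₀ ∧ ⋯ ∧ x_r` for an integer matrix `B` with `det B ≠ 0`;
hence passing to the `ℤ`-basis `(xᵢ)` can only shrink every coordinate.
-/

open Finset
open scoped Nat

lemma heightZ_bddAbove (P : ℤ[X]) : BddAbove (Set.range fun i : ℕ => |(P.coeff i : ℝ)|) := by
  refine ⟨∑ j ∈ P.support, |(P.coeff j : ℝ)|, ?_⟩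
  rintro _ ⟨i, rfl⟩
  by_cases hi : i ∈ P.support
  · exact single_le_sum (f := fun j => |(P.coeff j : ℝ)|) (fun j _ => abs_nonneg _) hi
  · simp only [notMem_support_iff.mp hi, Int.cast_zero, abs_zero]
    exact sum_nonneg fun j _ => abs_nonneg _

lemma abs_coeff_le_heightZ (P : ℤ[X]) (i : ℕ) : |(P.coeff i : ℝ)| ≤ heightZ P :=
  le_ciSup (heightZ_bddAbove P) i

lemma heightZ_nonneg (P : ℤ[X]) : 0 ≤ heightZ P :=
  Real.iSup_nonneg fun _ => abs_nonneg _

lemma one_le_heightZ {P : ℤ[X]} (hP : P ≠ 0) : 1 ≤ heightZ P := by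
  refine le_trans ?_ (abs_coeff_le_heightZ P P.natDegree)
  exact_mod_cast Int.one_le_abs (leadingCoeff_ne_zero.mpr hP)

lemma heightZ_pos {P : ℤ[X]} (hP : P ≠ 0) : 0 < heightZ P :=
  one_pos.trans_le (one_le_heightZ hP)

lemma toVec_dotProduct_XiVec {m : ℕ} {P : ℤ[X]} (hP : P.natDegree ≤ m) (ξ : ℝ) :
    toVec m P ⬝ᵥ XiVec m ξ = aeval ξ P := by
  rw [aeval_eq_sum_range' (Nat.lt_succ_of_le hP) ξ,
    ← Fin.sum_univ_eq_sum_range (fun j => (P.coeff j) • ξ ^ j) (m + 1)]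
  simp [dotProduct, toVec, XiVec, zsmul_eq_mul]

lemma abs_det_le_factorial_mul_prod {R n : Type*} [CommRing R] [LinearOrder R]
    [IsStrictOrderedRing R] [Fintype n] [DecidableEq n] (M : Matrix n n R) (b : n → R)
    (hb : ∀ i j, |M i j| ≤ b j) : |M.det| ≤ (Fintype.card n)! * ∏ j, b j :=
  calc |M.det| = |∑ σ : Equiv.Perm n, Equiv.Perm.sign σ • ∏ i, M (σ i) i| := by
        rw [det_apply]
    _ ≤ ∑ σ : Equiv.Perm n, |Equiv.Perm.sign σ • ∏ i, M (σ i) i| := abs_sum_le_sum_abs _ _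
    _ = ∑ σ : Equiv.Perm n, ∏ i, |M (σ i) i| := sum_congr rfl fun σ _ => by
        rw [← AbsoluteValue.abs_apply, AbsoluteValue.map_units_int_smul, AbsoluteValue.map_prod]
        rfl
    _ ≤ ∑ _σ : Equiv.Perm n, ∏ j, b j := by gcongr with σ _ j; exact hb _ _
    _ = (Fintype.card n)! * ∏ j, b j := by simp [Fintype.card_perm]

lemma one_le_abs_det_of_linearIndependent {K M ι : Type*} [Field K] [LinearOrder K]
    [IsStrictOrderedRing K] [AddCommGroup M] [Module K M] [Fintype ι] [DecidableEq ι]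
    {x P : ι → M} (B : Matrix ι ι ℤ) (hP : ∀ k, P k = ∑ j, (B j k : K) • x j)
    (hLI : LinearIndependent K P) : 1 ≤ |(B.map (Int.cast : ℤ → K)).det| := by
  have hcomp : P = Fintype.linearCombination K x ∘ (B.map (Int.cast : ℤ → K)).col := by
    ext1 k
    simp [hP k, Fintype.linearCombination_apply]
  have hunit : IsUnit (B.map (Int.cast : ℤ → K)) :=
    linearIndependent_cols_iff_isUnit.mp (LinearIndependent.of_comp _ (hcomp ▸ hLI))
  have hdet : B.det ≠ 0 := by
    rw [isUnit_iff_isUnit_det, ← Int.cast_det, isUnit_iff_ne_zero] at hunit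
    exact_mod_cast hunit
  rw [← Int.cast_det]
  exact_mod_cast Int.one_le_abs hdet

section Contraction

variable {N r : ℕ} (y : Fin N → ℝ)

noncomputable def contractMatrix (x : Fin (r + 1) → Fin N → ℝ)
    (s : {s : Finset (Fin N) // s.card = r}) :
    Matrix (Fin (r + 1)) (Fin (r + 1)) ℝ :=
  Matrix.of (Fin.snoc (fun a j => x j (s.1.orderIsoOfFin s.2 a)) (fun j => x j ⬝ᵥ y))

lemma contractCoord_eq_det (x : Fin (r + 1) → Fin N → ℝ)
    (s : {s : Finset (Fin N) // s.card = r}) :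
    contractCoord y x s = (contractMatrix y x s).det := by
  rw [det_succ_row _ (Fin.last r)]
  refine sum_congr rfl fun j _ => ?_
  have hsign : (-1 : ℝ) ^ ((Fin.last r : ℕ) + j) = (-1) ^ (r - j) := by
    rw [show (Fin.last r : ℕ) + j = (r - j) + 2 * j by simp only [Fin.val_last]; omega,
      pow_add, pow_mul]
    simp
  have hminor : (contractMatrix y x s).submatrix (Fin.last r).succAbove j.succAbove
      = Matrix.of fun a b : Fin r => x (j.succAbove b) (s.1.orderIsoOfFin s.2 a) := by
    ext a b
    simp [contractMatrix, Fin.succAbove_last, Fin.snoc_castSucc]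
  rw [hsign, hminor]
  simp [contractMatrix, Fin.snoc_last, wedgeCoord]

lemma contractMatrix_of_eq_sum {x P : Fin (r + 1) → Fin N → ℝ}
    (A : Matrix (Fin (r + 1)) (Fin (r + 1)) ℝ) (hP : ∀ k, P k = ∑ j, A j k • x j) (s : {s : Finset (Fin N) // s.card = r}) :
    contractMatrix y P s = contractMatrix y x s * A := by
  ext i k
  rw [mul_apply]
  refine Fin.lastCases ?_ (fun a => ?_) i
  · simp only [contractMatrix, of_apply, Fin.snoc_last, hP k, dotProduct, Finset.sum_apply,
      Pi.smul_apply, smul_eq_mul, Finset.sum_mul]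
    rw [Finset.sum_comm]
    exact sum_congr rfl fun j _ => sum_congr rfl fun t _ => by ring
  · simp [contractMatrix, Fin.snoc_castSucc, hP k, Finset.sum_apply, mul_comm]

lemma abs_contractCoord_le_of_eq_sum {x P : Fin (r + 1) → Fin N → ℝ}
    (A : Matrix (Fin (r + 1)) (Fin (r + 1)) ℝ) (hP : ∀ k, P k = ∑ j, A j k • x j)
    (hA : 1 ≤ |A.det|) (s : {s : Finset (Fin N) // s.card = r}) :
    |contractCoord y x s| ≤ |contractCoord y P s| := by
  rw [contractCoord_eq_det, contractCoord_eq_det, contractMatrix_of_eq_sum y A hP, det_mul, abs_mul]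
  exact le_mul_of_one_le_right (abs_nonneg _) hA

lemma abs_contractCoord_le (x : Fin (r + 1) → Fin N → ℝ) (h : Fin (r + 1) → ℝ)
    (hx : ∀ i j, |x i j| ≤ h i) (s : {s : Finset (Fin N) // s.card = r}) :
    |contractCoord y x s| ≤ r ! * ∑ i, |x i ⬝ᵥ y| * ∏ b, h (i.succAbove b) := by
  refine (abs_sum_le_sum_abs _ _).trans ?_
  rw [mul_sum]
  refine sum_le_sum fun i _ => ?_
  have hminor : |wedgeCoord (fun a => x (i.succAbove a)) s| ≤ r ! * ∏ b, h (i.succAbove b) := by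
    have := abs_det_le_factorial_mul_prod
      (Matrix.of fun a b : Fin r => x (i.succAbove b) (s.1.orderIsoOfFin s.2 a))
      (fun b => h (i.succAbove b)) fun a b => hx _ _
    rwa [Fintype.card_fin] at this
  rw [abs_mul, abs_mul, abs_pow, abs_neg, abs_one, one_pow, one_mul, mul_left_comm]
  exact mul_le_mul_of_nonneg_left hminor (abs_nonneg _)

lemma contractNorm_le_of_forall_abs_le (x : Fin (r + 1) → Fin N → ℝ) {T : ℝ} (hT0 : 0 ≤ T)
    (hT : ∀ s, |contractCoord y x s| ≤ T) : contractNorm y x ≤ 2 ^ N * T := by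
  have hcard : (Fintype.card {s : Finset (Fin N) // s.card = r} : ℝ) ≤ 2 ^ N := by
    exact_mod_cast (Fintype.card_subtype_le _).trans_eq (by simp [Fintype.card_finset])
  have h1 : (1 : ℝ) ≤ 2 ^ N := one_le_pow₀ (by norm_num)
  rw [contractNorm, Real.sqrt_le_left (by positivity)]
  calc ∑ s, contractCoord y x s ^ 2 ≤ ∑ _s : {s : Finset (Fin N) // s.card = r}, T ^ 2 :=
        sum_le_sum fun s _ => sq_le_sq' (abs_le.mp (hT s)).1 (abs_le.mp (hT s)).2
    _ = Fintype.card {s : Finset (Fin N) // s.card = r} * T ^ 2 := by simp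
    _ ≤ 2 ^ N * 2 ^ N * T ^ 2 := by
        gcongr; exact hcard.trans (le_mul_of_one_le_right (by positivity) h1)
    _ = (2 ^ N * T) ^ 2 := by ring

end Contraction

lemma abs_contractCoord_toVec_le {m r : ℕ} (ξ : ℝ) (P : Fin (r + 1) → ℤ[X])
    (hdeg : ∀ i, (P i).natDegree ≤ m) (hP : ∀ i, P i ≠ 0)
    (s : {s : Finset (Fin (m + 1)) // s.card = r}) :
    |contractCoord (XiVec m ξ) (fun i => toVec m (P i)) s| ≤
      r ! * ∑ i, |aeval ξ (P i)| / heightZ (P i) * ∏ j, heightZ (P j) := by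
  refine (abs_contractCoord_le _ _ (fun i => heightZ (P i))
    (fun i j => abs_coeff_le_heightZ _ _) s).trans_eq ?_
  congr 1
  refine sum_congr rfl fun i _ => ?_
  change |toVec m (P i) ⬝ᵥ XiVec m ξ| * _ = _
  rw [toVec_dotProduct_XiVec (hdeg i), Fin.prod_univ_succAbove _ i,
    ← mul_assoc, div_mul_cancel₀ _ (heightZ_pos (hP i)).ne']

theorem Hstar_le_general (m : ℕ) (ξ : ℝ) :
    ∃ c : ℝ, 0 < c ∧ ∀ (r : ℕ) (P : Fin (r + 1) → Polynomial ℤ),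
      (∀ i, (P i).natDegree ≤ m) →
      LinearIndependent ℝ (fun i => toVec m (P i)) →
      ∀ xs : Fin (r + 1) → Fin (m + 1) → ℝ,
        IsZBasis (Submodule.span ℝ (Set.range fun i => toVec m (P i))) xs →
        contractNorm (XiVec m ξ) xs ≤
          c * ∑ i, (|Polynomial.aeval ξ (P i)| / heightZ (P i)) *
            ∏ j, heightZ (P j) := by
  refine ⟨2 ^ (m + 1) * m !, by positivity, fun r P hdeg hLI xs hxs => ?_⟩
  have hP : ∀ i, P i ≠ 0 := fun i h => hLI.ne_zero i (by ext j; simp [toVec, h])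
  have hrm : r ≤ m := by simpa using hLI.fintype_card_le_finrank
  obtain ⟨B, hB⟩ : ∃ B : Matrix (Fin (r + 1)) (Fin (r + 1)) ℤ,
      ∀ k, toVec m (P k) = ∑ j, (B j k : ℝ) • xs j := by
    choose c hc using fun k =>
      hxs.2.2.2 _ (Submodule.subset_span ⟨k, rfl⟩) fun j => ⟨(P k).coeff j, rfl⟩
    exact ⟨fun j k => c k j, hc⟩
  have hS : 0 ≤ ∑ i, |aeval ξ (P i)| / heightZ (P i) * ∏ j, heightZ (P j) :=
    sum_nonneg fun i _ => mul_nonneg (div_nonneg (abs_nonneg _) (heightZ_nonneg _))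
      (prod_nonneg fun j _ => heightZ_nonneg _)
  rw [mul_assoc]
  refine contractNorm_le_of_forall_abs_le _ _ (by positivity) fun s => ?_
  calc |contractCoord (XiVec m ξ) xs s|
      ≤ |contractCoord (XiVec m ξ) (fun i => toVec m (P i)) s| :=
        abs_contractCoord_le_of_eq_sum _ _ hB
          (one_le_abs_det_of_linearIndependent B hB hLI) s
    _ ≤ r ! * _ := abs_contractCoord_toVec_le ξ P hdeg hP s
    _ ≤ m ! * _ := by gcongr

/-- If `V` is spanned by `k = r+1 ≥ 1` linearly independent integer polynomials
`P₀, …, P_r` of degree at most `m`, then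
`Ĥ*(V) ≤ c ∑ᵢ (|Pᵢ(ξ)|/H(Pᵢ)) ∏ⱼ H(Pⱼ)`, where `Ĥ*(V) = ‖Ξ_m ⌟ (x₀ ∧ ⋯ ∧ x_r)‖`
for any `ℤ`-basis `(x₀, …, x_r)` of `V ∩ ℤ^{m+1}`. -/
theorem Hstar_le (m : ℕ) (hm : 1 ≤ m) (ξ : ℝ) :
    ∃ c : ℝ, 0 < c ∧ ∀ (r : ℕ) (P : Fin (r + 1) → Polynomial ℤ),
      (∀ i, (P i).natDegree ≤ m) →
      LinearIndependent ℝ (fun i => toVec m (P i)) →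
      ∀ xs : Fin (r + 1) → Fin (m + 1) → ℝ,
        IsZBasis (Submodule.span ℝ (Set.range fun i => toVec m (P i))) xs →
        contractNorm (XiVec m ξ) xs ≤
          c * ∑ i, (|Polynomial.aeval ξ (P i)| / heightZ (P i)) *
            ∏ j, heightZ (P j) :=
  Hstar_le_general m ξ
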